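/- arXiv:2503.22470 — 3 statements merged into one kernel-verified Lean document; each statement's English description precedes it below -/
import Mathlib

section
/- Let V be a nonzero finite-dimensional complex vector space, G a group, and ρ : G → GL(V) an irreducible linear representation (the only subspaces of V invariant under every ρ(g) are 0 and V). Suppose B is a Hermitian sesquilinear form on V (B(x,y) = conj(B(y,x))) which is invariant under ρ (B(ρ(g)x, ρ(g)y) = B(x,y) for all g ∈ G, x,y ∈ V) and indefinite, i.e. there exist vectors v, w ∈ V with B(v,v) > 0 and B(w,w) < 0 (these values are real since B is Hermitian). Then the image ρ(G) ⊆ GL(V) is infinite; in particular G is an infinite group. -/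
/-!
If `ρ(G)` were finite, averaging any inner product over `ρ(G)` would give a `ρ`-invariant inner
product. Relative to it, the invariant Hermitian form `B` is `⟪x, T y⟫` for an operator `T`
commuting with `ρ`, so by Schur's lemma `T = μ • 1`. Then `re B(x, x) = re μ * ‖x‖²` has the sign
of `re μ` for every `x`, and `B` cannot be indefinite.
-/

open scoped InnerProductSpace

namespace Module.End

theorem exists_forall_eq_smul_of_commute {K V ι : Type*} [Field K] [IsAlgClosed K]
    [AddCommGroup V] [Module K V] [FiniteDimensional K V] [Nontrivial V]
    (f : ι → V →ₗ[K] V)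
    (hirr : ∀ W : Submodule K V, (∀ i, ∀ x ∈ W, f i x ∈ W) → W = ⊥ ∨ W = ⊤)
    (T : End K V) (hT : ∀ i, Commute T (f i)) : ∃ μ : K, ∀ y, T y = μ • y := by
  obtain ⟨μ, hμ⟩ := T.exists_eigenvalue
  have hinvariant : ∀ i, ∀ x ∈ T.eigenspace μ, f i x ∈ T.eigenspace μ := by
    intro i x hx
    rw [mem_eigenspace_iff] at hx ⊢
    rw [← mul_apply, hT i, mul_apply, hx, map_smul]
  have htop : T.eigenspace μ = ⊤ := (hirr _ hinvariant).resolve_left hμ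
  exact ⟨μ, fun y => mem_eigenspace_iff.mp (htop ▸ Submodule.mem_top)⟩

end Module.End

theorem exists_linearMap_inner_eq_of_hermitian {𝕜 V : Type*} [RCLike 𝕜] [NormedAddCommGroup V]
    [InnerProductSpace 𝕜 V] [FiniteDimensional 𝕜 V] (B : V → V → 𝕜)
    (hadd : ∀ x y z : V, B x (y + z) = B x y + B x z)
    (hsmul : ∀ (c : 𝕜) (x y : V), B x (c • y) = c * B x y)
    (hherm : ∀ x y : V, B x y = starRingEnd 𝕜 (B y x)) :
    ∃ T : V →ₗ[𝕜] V, ∀ x y, B x y = ⟪x, T y⟫_𝕜 := by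
  have := FiniteDimensional.complete 𝕜 V
  have hriesz : ∀ y : V, ∃ z : V, ∀ x, ⟪x, z⟫_𝕜 = B x y := fun y =>
    let f : V →ₗ[𝕜] 𝕜 := ⟨⟨B y, hadd y⟩, fun c => hsmul c y⟩
    ⟨(InnerProductSpace.toDual 𝕜 V).symm (LinearMap.toContinuousLinearMap f), fun x => by
      rw [← inner_conj_symm, InnerProductSpace.toDual_symm_apply, hherm x y]; rfl⟩
  choose T hT using hriesz
  refine ⟨⟨⟨T, fun y z => ext_inner_left 𝕜 fun x => ?_⟩, fun c y => ext_inner_left 𝕜 fun x => ?_⟩,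
    fun x y => (hT y x).symm⟩
  · rw [inner_add_right, hT, hT, hT, hadd]
  · rw [RingHom.id_apply, inner_smul_right, hT, hT, hsmul]

theorem exists_eq_mul_inner_of_invariant {V ι : Type*} [NormedAddCommGroup V]
    [InnerProductSpace ℂ V] [FiniteDimensional ℂ V] [Nontrivial V] (f : ι → V ≃ₗ[ℂ] V)
    (hirr : ∀ W : Submodule ℂ V, (∀ i, ∀ x ∈ W, f i x ∈ W) → W = ⊥ ∨ W = ⊤)
    (hf : ∀ i x y, ⟪f i x, f i y⟫_ℂ = ⟪x, y⟫_ℂ) (B : V → V → ℂ)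
    (hadd : ∀ x y z : V, B x (y + z) = B x y + B x z)
    (hsmul : ∀ (c : ℂ) (x y : V), B x (c • y) = c * B x y)
    (hherm : ∀ x y : V, B x y = starRingEnd ℂ (B y x))
    (hinv : ∀ i x y, B (f i x) (f i y) = B x y) :
    ∃ μ : ℂ, ∀ x y, B x y = μ * ⟪x, y⟫_ℂ := by
  obtain ⟨T, hT⟩ := exists_linearMap_inner_eq_of_hermitian B hadd hsmul hherm
  have hcomm : ∀ i, Commute T (f i : V →ₗ[ℂ] V) := fun i => LinearMap.ext fun y =>
    ext_inner_left ℂ fun x => by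
      obtain ⟨x, rfl⟩ := (f i).surjective x
      simp only [Module.End.mul_apply, LinearEquiv.coe_coe]
      rw [← hT, hinv, hT, hf]
  obtain ⟨μ, hμ⟩ := Module.End.exists_forall_eq_smul_of_commute _ hirr T hcomm
  exact ⟨μ, fun x y => by rw [hT, hμ, inner_smul_right]⟩

section Averaging

variable {𝕜 V E : Type*} [RCLike 𝕜] [AddCommGroup V] [Module 𝕜 V] [NormedAddCommGroup E]
  [InnerProductSpace 𝕜 E] (K : Subgroup (V ≃ₗ[𝕜] V)) (e : V →ₗ[𝕜] E)

noncomputable def averagingMap : V →ₗ[𝕜] PiLp 2 (fun _ : K => E) :=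
  (WithLp.linearEquiv 2 𝕜 (K → E)).symm.toLinearMap ∘ₗ
    LinearMap.pi fun A => e ∘ₗ (A : V ≃ₗ[𝕜] V).toLinearMap

theorem averagingMap_injective (he : Function.Injective e) :
    Function.Injective (averagingMap K e) := by
  refine (injective_iff_map_eq_zero _).mpr fun x hx => he ?_
  simpa [averagingMap] using congr($hx 1)

theorem inner_averagingMap [Fintype K] (x y : V) :
    ⟪averagingMap K e x, averagingMap K e y⟫_𝕜 = ∑ A : K, ⟪e (A.1 x), e (A.1 y)⟫_𝕜 := by
  simp [averagingMap, PiLp.inner_apply]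

theorem inner_averagingMap_map [Fintype K] {A : V ≃ₗ[𝕜] V} (hA : A ∈ K) (x y : V) :
    ⟪averagingMap K e (A x), averagingMap K e (A y)⟫_𝕜 =
      ⟪averagingMap K e x, averagingMap K e y⟫_𝕜 := by
  simp only [inner_averagingMap]
  exact Fintype.sum_equiv (Equiv.mulRight ⟨A, hA⟩) _ _ fun _ => rfl

end Averaging

/-- **Coxeter's lemma.** If a group `G` has an irreducible finite-dimensional complex
representation `ρ` preserving an indefinite Hermitian sesquilinear form, then the image
`ρ(G)` is infinite; in particular `G` is infinite. -/
theorem coxeter_indefinite_hermitian_infinite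
    {V : Type*} [AddCommGroup V] [Module ℂ V] [FiniteDimensional ℂ V] [Nontrivial V]
    {G : Type*} [Group G] (ρ : G →* (V ≃ₗ[ℂ] V))
    (hirr : ∀ W : Submodule ℂ V, (∀ (g : G), ∀ x ∈ W, ρ g x ∈ W) → W = ⊥ ∨ W = ⊤)
    (B : V → V → ℂ)
    (haddl : ∀ x y z : V, B x (y + z) = B x y + B x z)
    (hsmul : ∀ (c : ℂ) (x y : V), B x (c • y) = c * B x y)
    (hherm : ∀ x y : V, B x y = starRingEnd ℂ (B y x))
    (hinv : ∀ (g : G) (x y : V), B (ρ g x) (ρ g y) = B x y)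
    (hindef : ∃ v w : V, 0 < (B v v).re ∧ (B w w).re < 0) :
    (Set.range ρ).Infinite ∧ Infinite G := by
  have hrange : (Set.range ρ).Infinite := by
    intro hfin
    have : Fintype ρ.range := by
      rw [← ρ.coe_range] at hfin
      exact hfin.fintype
    let e : V ≃ₗ[ℂ] EuclideanSpace ℂ (Fin (Module.finrank ℂ V)) :=
      (Module.finBasis ℂ V).equivFun ≪≫ₗ (WithLp.linearEquiv 2 ℂ _).symm
    let avg := averagingMap ρ.range e.toLinearMap
    let _ := NormedAddCommGroup.induced V _ avg (averagingMap_injective _ _ e.injective)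
    let _ := InnerProductSpace.induced avg
    have hunitary : ∀ g x y, ⟪ρ g x, ρ g y⟫_ℂ = ⟪x, y⟫_ℂ := fun g =>
      inner_averagingMap_map _ _ (MonoidHom.mem_range.2 ⟨g, rfl⟩)
    obtain ⟨μ, hμ⟩ := exists_eq_mul_inner_of_invariant ρ hirr hunitary B haddl hsmul hherm hinv
    have hre : ∀ x, (B x x).re = μ.re * ‖x‖ ^ 2 := fun x => by
      simp [hμ, Complex.mul_re, ← Complex.ofReal_pow]
    obtain ⟨v, w, hv, hw⟩ := hindef
    rw [hre] at hv hw
    exact hw.not_ge (mul_nonneg (pos_of_mul_pos_left hv (sq_nonneg _)).le (sq_nonneg _))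
  exact ⟨hrange, ⟨fun _ => hrange (Set.finite_range ρ)⟩⟩
end

section
/- Let G be a group and let N be a normal subgroup of G which is the normal closure in G of k elements a₁, …, a_k ∈ G. Assume that every group homomorphism from G to the additive group ℝ is trivial (equivalently, H¹(G; ℝ) = 0 for the trivial action). If the second group cohomology H²(G; ℝ) with trivial real coefficients is a finite-dimensional real vector space of dimension d, then H²(G/N; ℝ) with trivial real coefficients is also finite-dimensional, of dimension at most d + k. -/
/-!
The inflation map `H²(G ⧸ N) → H²(G)` has a kernel of dimension at most `k`. Suppose the inflation
of a 2-cocycle `c` on `G ⧸ N` is the coboundary of `β : G → ℝ`; since `H¹(G; ℝ) = 0`, `β` is unique.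
The map `n ↦ β n - β 1` is a `G`-conjugation-invariant homomorphism `N → ℝ`, so it is determined by
its values at the normal generators `aᵢ`, and when these vanish `β` descends to `G ⧸ N` and `c` is a
coboundary there. Thus inflation together with `c ↦ (β aᵢ - β 1)ᵢ` embeds `H²(G ⧸ N)` into
`H²(G) × ℝᵏ`.
-/

open groupCohomology Module CategoryTheory

universe u

theorem MonoidHom.eq_one_of_conj_invariant {G M : Type*} [Group G] [Group M] {S : Set G}
    (φ : Subgroup.normalClosure S →* M)
    (hconj : ∀ (g : G) (n : Subgroup.normalClosure S), φ (MulAut.conjNormal g n) = φ n)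
    (hS : ∀ s (hs : s ∈ S), φ ⟨s, Subgroup.subset_normalClosure hs⟩ = 1) : φ = 1 := by
  let H : Subgroup G := φ.ker.map (Subgroup.normalClosure S).subtype
  have : H.Normal := ⟨by
    rintro _ ⟨n, hn, rfl⟩ g
    exact ⟨MulAut.conjNormal g n, (hconj g n).trans hn, rfl⟩⟩
  have hle : Subgroup.normalClosure S ≤ H :=
    Subgroup.normalClosure_le_normal fun s hs => ⟨_, hS s hs, rfl⟩
  ext n
  obtain ⟨m, hm, hmn⟩ := hle n.2
  rwa [Subtype.ext hmn] at hm

theorem groupCohomology.d₁₂_injective_of_isTrivial {k G : Type u} [CommRing k] [Group G]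
    (A : Rep k G) [A.IsTrivial]
    (hH1 : ∀ f : G → A, (∀ x y : G, f (x * y) = f x + f y) → ∀ x, f x = 0) :
    Function.Injective (d₁₂ A).hom := by
  refine (injective_iff_map_eq_zero _).2 fun f hf => funext ?_
  exact hH1 f (cocycles₁_map_mul_of_isTrivial ⟨f, hf⟩)

theorem Module.finite_and_finrank_le_add_of_ker_le {K M P W V : Type*} [DivisionRing K]
    [AddCommGroup M] [Module K M] [AddCommGroup P] [Module K P] [AddCommGroup W] [Module K W]
    [AddCommGroup V] [Module K V] [FiniteDimensional K W] [FiniteDimensional K V]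
    (p : M →ₗ[K] P) (hp : Function.Surjective p) (f : M →ₗ[K] W)
    (τ : LinearMap.ker f →ₗ[K] V) (h : ∀ x, τ x = 0 → p x = 0) :
    FiniteDimensional K P ∧ finrank K P ≤ finrank K W + finrank K V := by
  obtain ⟨τ', hτ'⟩ := τ.exists_extend
  let Φ := f.prod τ'
  have hker : LinearMap.ker Φ ≤ LinearMap.ker p := by
    intro x hx
    rw [LinearMap.ker_prod] at hx
    exact h ⟨x, hx.1⟩ (by rw [← hτ']; exact hx.2)
  let g : LinearMap.range Φ →ₗ[K] P := (LinearMap.ker Φ).liftQ p hker ∘ₗ Φ.quotKerEquivRange.symm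
  have hgΦ : g ∘ Φ.rangeRestrict = p := funext fun x => by
    have : Φ.rangeRestrict x = Φ.quotKerEquivRange (Submodule.Quotient.mk x) :=
      Subtype.ext (Φ.quotKerEquivRange_apply_mk x).symm
    simp only [Function.comp_apply, g, LinearMap.comp_apply, this, LinearEquiv.coe_coe,
      LinearEquiv.symm_apply_apply, Submodule.liftQ_apply]
  have hg : Function.Surjective g := (hgΦ ▸ hp).of_comp
  refine ⟨.of_surjective g hg, (LinearMap.finrank_le_finrank_of_surjective hg).trans ?_⟩
  exact (Submodule.finrank_le _).trans finrank_prod.le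

theorem QuotientGroup.map_mul_eq_of_coboundary_factors {G A : Type*} [Group G]
    [AddCommGroup A] {S : Set G} (β : G → A)
    (c : (G ⧸ Subgroup.normalClosure S) × (G ⧸ Subgroup.normalClosure S) → A)
    (hc : ∀ g h : G, β h - β (g * h) + β g = c (g, h)) (hS : ∀ s ∈ S, β s = β 1)
    (g : G) {n : G} (hn : n ∈ Subgroup.normalClosure S) : β (g * n) = β g := by
  have hright (x : G) {m : G} (hm : m ∈ Subgroup.normalClosure S) :
      β m - β (x * m) + β x = β 1 :=
    calc β m - β (x * m) + β x = c (x, m) := hc x m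
      _ = c (x, (1 : G)) := by rw [(QuotientGroup.eq_one_iff m).2 hm, QuotientGroup.mk_one]
      _ = β 1 := by rw [← hc x 1, mul_one]; abel
  have hleft {m : G} (hm : m ∈ Subgroup.normalClosure S) (x : G) :
      β x - β (m * x) + β m = β 1 :=
    calc β x - β (m * x) + β m = c (m, x) := hc m x
      _ = c ((1 : G), x) := by rw [(QuotientGroup.eq_one_iff m).2 hm, QuotientGroup.mk_one]
      _ = β 1 := by rw [← hc 1 x, one_mul]; abel
  let φ : Subgroup.normalClosure S →* Multiplicative A :=
    MonoidHom.mk' (fun n => .ofAdd (β n - β 1)) fun n m => by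
      change Multiplicative.ofAdd _ = Multiplicative.ofAdd (_ + _)
      rw [Subgroup.coe_mul, toAdd_ofAdd, toAdd_ofAdd]
      congr 1
      linear_combination (norm := module) -hright n m.2
  have hφ : φ = 1 := by
    refine φ.eq_one_of_conj_invariant (fun g n => ?_) (fun s hs => ?_)
    · have h₁ := hright g n.2
      have h₂ := hleft (MulAut.conjNormal g n).2 g
      rw [MulAut.conjNormal_apply, show g * n * g⁻¹ * g = g * n by group] at h₂
      change Multiplicative.ofAdd _ = Multiplicative.ofAdd _
      rw [MulAut.conjNormal_apply]
      congr 1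
      linear_combination (norm := module) h₂ - h₁
    · change Multiplicative.ofAdd _ = Multiplicative.ofAdd 0
      rw [hS s hs, sub_self]
  have hβn : β n - β 1 = 0 := congrArg Multiplicative.toAdd (DFunLike.congr_fun hφ ⟨n, hn⟩)
  linear_combination (norm := module) hβn - hright g hn

theorem groupCohomology.mem_coboundaries₂_of_inflation_eq_d₁₂ {k G A : Type u} [CommRing k]
    [Group G] [AddCommGroup A] [Module k A] {S : Set G}
    (c : (G ⧸ Subgroup.normalClosure S) × (G ⧸ Subgroup.normalClosure S) → A) (β : G → A)
    (hβ : ∀ g h : G, β h - β (g * h) + β g = c (g, h)) (hS : ∀ s ∈ S, β s = β 1) :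
    c ∈ coboundaries₂ (Rep.trivial k (G ⧸ Subgroup.normalClosure S) A) := by
  let γ : G ⧸ Subgroup.normalClosure S → A := fun q => β q.out
  have hγ (g : G) : γ g = β g := by
    obtain ⟨n, hn⟩ := QuotientGroup.mk_out_eq_mul (Subgroup.normalClosure S) g
    rw [show γ g = β (g * n) from congrArg β hn,
      QuotientGroup.map_mul_eq_of_coboundary_factors β c hβ hS g n.2]
  refine ⟨γ, funext fun ⟨q, r⟩ => ?_⟩
  obtain ⟨g, rfl⟩ := QuotientGroup.mk_surjective q
  obtain ⟨h, rfl⟩ := QuotientGroup.mk_surjective r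
  simp [hγ, ← QuotientGroup.mk_mul, hβ]

theorem groupCohomology.finrank_H2_quotient_normalClosure_le {K G : Type u} [Field K] [Group G]
    {ι : Type*} [Fintype ι] (a : ι → G)
    (hH1 : ∀ f : G → K, (∀ x y : G, f (x * y) = f x + f y) → ∀ x, f x = 0)
    [FiniteDimensional K (H2 (Rep.trivial K G K))] :
    FiniteDimensional K (H2 (Rep.trivial K (G ⧸ Subgroup.normalClosure (Set.range a)) K)) ∧
    finrank K (H2 (Rep.trivial K (G ⧸ Subgroup.normalClosure (Set.range a)) K)) ≤
      finrank K (H2 (Rep.trivial K G K)) + Fintype.card ι := by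
  let N := Subgroup.normalClosure (Set.range a)
  let inflation := (mapCocycles₂ (A := Rep.trivial K (G ⧸ N) K) (QuotientGroup.mk' N) (𝟙 _)).hom
  let inflationClass := (H2π (Rep.trivial K G K)).hom ∘ₗ inflation
  let restrictInflation : LinearMap.ker inflationClass →ₗ[K] coboundaries₂ (Rep.trivial K G K) :=
    LinearMap.codRestrict _
      ((cocycles₂ _).subtype ∘ₗ inflation ∘ₗ (LinearMap.ker inflationClass).subtype)
      fun x => (H2π_eq_zero_iff _).1 x.2
  have hd₁₂ := d₁₂_injective_of_isTrivial (Rep.trivial K G K) hH1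
  let primitive := (LinearEquiv.ofInjective _ hd₁₂).symm
  let evalGenerators : (G → K) →ₗ[K] ι → K :=
    LinearMap.pi fun i => LinearMap.proj (R := K) (φ := fun _ : G => K) (a i) - LinearMap.proj 1
  have hker (x : LinearMap.ker inflationClass)
      (hx : evalGenerators (primitive (restrictInflation x)) = 0) :
      (H2π (Rep.trivial K (G ⧸ N) K)).hom x = 0 := by
    have hβ := congr_fun (LinearEquiv.ofInjective_symm_apply _ (h := hd₁₂) (restrictInflation x))
    rw [H2π_eq_zero_iff]
    refine mem_coboundaries₂_of_inflation_eq_d₁₂ _ (primitive (restrictInflation x))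
      (fun g h => hβ (g, h)) ?_
    rintro _ ⟨i, rfl⟩
    exact sub_eq_zero.1 (congr_fun hx i)
  simpa using Module.finite_and_finrank_le_add_of_ker_le (H2π _).hom
    ((ModuleCat.epi_iff_surjective _).1 inferInstance) inflationClass
    (evalGenerators ∘ₗ primitive.toLinearMap ∘ₗ restrictInflation) hker

/-- If every homomorphism `G → (ℝ, +)` is trivial and `H²(G; ℝ)` (trivial coefficients) has
dimension `d`, then for the normal closure `N` of `k` elements of `G`, `H²(G/N; ℝ)` is
finite-dimensional of dimension at most `d + k`. -/
theorem finrank_H2_quotient_le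
    {G : Type} [Group G] {k : ℕ} (a : Fin k → G)
    (hH1 : ∀ f : G → ℝ, (∀ x y : G, f (x * y) = f x + f y) → ∀ x, f x = 0)
    (d : ℕ)
    [FiniteDimensional ℝ (groupCohomology (Rep.trivial ℝ G ℝ) 2)]
    (hd : Module.finrank ℝ (groupCohomology (Rep.trivial ℝ G ℝ) 2) = d) :
    FiniteDimensional ℝ
      (groupCohomology (Rep.trivial ℝ (G ⧸ Subgroup.normalClosure (Set.range a)) ℝ) 2) ∧
    Module.finrank ℝ
      (groupCohomology (Rep.trivial ℝ (G ⧸ Subgroup.normalClosure (Set.range a)) ℝ) 2)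
      ≤ d + k := by
  subst hd
  simpa using finrank_H2_quotient_normalClosure_le a hH1
end

section
/- Let p be a positive integer divisible by 4 and let ζ ∈ ℂ be a primitive 2p-th root of unity. Set λ₀ = −ζ⁴, λ₁ = ζ, λ₂ = 1, λ₃ = −ζ, λ₄ = −ζ⁴. If there exist indices 0 ≤ i < j ≤ 4 with (λ₀·λ₁·λ₂·λ₃·λ₄)¹² = (λᵢ·λⱼ)³⁰, then either ζ¹²⁰ = 1 or (i, j) ∈ {(0, 2), (2, 4), (1, 3)}. -/
private lemma zeta_cancel_aux {ζ : ℂ} (hz : ζ ≠ 0) (a b : ℕ)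
    (hh : ζ ^ (a + b) = ζ ^ a) : ζ ^ b = 1 :=
  mul_left_cancel₀ (pow_ne_zero a hz) (by rw [← pow_add, hh, mul_one])

private lemma zeta_30_aux {ζ : ℂ} (hh : ζ ^ 30 = 1) : ζ ^ 120 = 1 := by
  have : (ζ ^ 30) ^ 4 = 1 := by rw [hh]; ring
  simpa [← pow_mul] using this

private lemma zeta_90_aux {p : ℕ} {ζ : ℂ} (hζ : IsPrimitiveRoot ζ (2 * p))
    (h8 : 8 ∣ 2 * p) (hh : ζ ^ 90 = 1) : False := by
  have hd : 2 * p ∣ 90 := hζ.dvd_of_pow_eq_one 90 hh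
  exact absurd (h8.trans hd) (by norm_num)

/-- For `p > 0` divisible by `4`, `ζ` a primitive `2p`-th root of unity, and
`λ₀ = -ζ⁴, λ₁ = ζ, λ₂ = 1, λ₃ = -ζ, λ₄ = -ζ⁴`: if `(λ₀λ₁λ₂λ₃λ₄)¹² = (λᵢλⱼ)³⁰` for some
`i < j`, then either `ζ¹²⁰ = 1` or `(i,j) ∈ {(0,2), (2,4), (1,3)}`. -/
theorem zeta_pow_or_index_pairs
    (p : ℕ) (hp : 0 < p) (h4 : 4 ∣ p) (ζ : ℂ)
    (hζ : IsPrimitiveRoot ζ (2 * p)) (l : Fin 5 → ℂ)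
    (hl : l = ![-ζ ^ 4, ζ, 1, -ζ, -ζ ^ 4])
    (i j : Fin 5) (hij : i < j)
    (h : (l 0 * l 1 * l 2 * l 3 * l 4) ^ 12 = (l i * l j) ^ 30) :
    ζ ^ 120 = 1 ∨ (i = 0 ∧ j = 2) ∨ (i = 2 ∧ j = 4) ∨ (i = 1 ∧ j = 3) := by
  have hz : ζ ≠ 0 := hζ.ne_zero (by positivity)
  have h8 : 8 ∣ 2 * p := by omega
  subst hl
  fin_cases i <;> fin_cases j <;> simp_all <;> ring_nf at h ⊢
  all_goals first
    | exact zeta_30_aux (zeta_cancel_aux hz 120 30 (by linear_combination -h))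
    | exact zeta_cancel_aux hz 120 120 (by linear_combination -h)
    | exact absurd (zeta_cancel_aux hz 30 90 (by linear_combination h)) (zeta_90_aux hζ h8)
end
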